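/- Let V be a finite set, f : Finset V → ℝ a nonnegative symmetric submodular function with f(∅) = 0, M a matroid on V of rank k ≥ 2, and let P_1, …, P_k be a greedy splitting sequence for (f, M). Then for every feasible partition P* of V (a partition into nonempty parts admitting a basis B of M with |B ∩ X| = 1 for every class X ∈ P*), we have Σ_{X ∈ P_k} f(X) ≤ (2 − 2/k) · Σ_{X ∈ P*} f(X). -/

import Mathlib

open Finset

variable {V : Type*} [Fintype V] [DecidableEq V]

/-- `P` is a partition of the finite ground set into nonempty parts. -/
def IsPartition (P : Finset (Finset V)) : Prop :=
  (∀ X ∈ P, X.Nonempty) ∧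
  (∀ X ∈ P, ∀ Y ∈ P, X ≠ Y → Disjoint X Y) ∧
  P.sup id = Finset.univ

/-- `P` is a feasible partition for the rank-`k` matroid given by `Indep`. -/
def Feasible (Indep : Finset V → Prop) (k : ℕ) (P : Finset (Finset V)) : Prop :=
  IsPartition P ∧ ∃ B : Finset V, Indep B ∧ B.card = k ∧ ∀ X ∈ P, (B ∩ X).card = 1

/-- `P` admits an independent transversal: there is an independent set containing
exactly one element of each class of `P`. -/
def AdmitsTransversal (Indep : Finset V → Prop) (P : Finset (Finset V)) : Prop :=
  ∃ I : Finset V, Indep I ∧ ∀ X ∈ P, (I ∩ X).card = 1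

/-- A greedy splitting sequence for `(f, M)`: it starts with the trivial partition
`{V}` and, at each step, one class `W` is split into nonempty parts `X, W \ X` such
that the new partition admits an independent transversal and the split minimizes
`f(X') + f(W' \ X') - f(W')` over all such admissible splits. -/
def GreedySplitSeq (f : Finset V → ℝ) (Indep : Finset V → Prop) (k : ℕ)
    (P : ℕ → Finset (Finset V)) : Prop :=
  P 1 = {Finset.univ} ∧
  ∀ i : ℕ, 1 ≤ i → i + 1 ≤ k →
    ∃ W ∈ P i, ∃ X : Finset V, X.Nonempty ∧ X ⊂ W ∧
      P (i + 1) = insert X (insert (W \ X) ((P i).erase W)) ∧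
      AdmitsTransversal Indep (P (i + 1)) ∧
      ∀ W' ∈ P i, ∀ X' : Finset V, X'.Nonempty → X' ⊂ W' →
        AdmitsTransversal Indep (insert X' (insert (W' \ X') ((P i).erase W'))) →
        f X + f (W \ X) - f W ≤ f X' + f (W' \ X') - f W'

/-!
Splitting a class `W` along a set `T` costs `f (W ∩ T) + f (W \ T) - f W ≤ 2 f T` when `f` is
symmetric submodular. Let `B` be a basis that is a transversal of `P*`. While the current partition
`P_i` has `i < k` classes, take an independent transversal `J` of `P_i` meeting `B` as much as
possible. Augmentation gives `k - i` elements `b ∈ B \ J` with `J + b` independent, and maximality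
forces the element `a` of `J` in the class of such a `b` to lie in `B` too. A class of `P*` through
`b`, or through one such `a`, separates `a` from `b`, so splitting along it keeps the independent
transversal `J + b`. Hence at least `k - i + 1` classes of `P*` bound the greedy increment at step
`i` by twice their value; choosing them for `i = k - 1, …, 1` in turn, they can be taken distinct
and different from a class of maximal value, so `f(P_k) ≤ 2 (f(P*) - max) ≤ (2 - 2/k) f(P*)`.
-/

section SymmetricSubmodular

variable {f : Finset V → ℝ}

theorem map_univ_eq_zero_of_symm (h_empty_f : f ∅ = 0)
    (h_symm : ∀ A : Finset V, f A = f (univ \ A)) : f univ = 0 := by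
  rw [h_symm, sdiff_self, bot_eq_empty, h_empty_f]

theorem nonneg_of_symm_submod (h_submod : ∀ A B : Finset V, f (A ∪ B) + f (A ∩ B) ≤ f A + f B)
    (h_empty_f : f ∅ = 0) (h_symm : ∀ A : Finset V, f A = f (univ \ A)) (A : Finset V) :
    0 ≤ f A := by
  have h := h_submod A (univ \ A)
  rw [union_sdiff_of_subset (subset_univ A), inter_sdiff_self, ← h_symm,
    map_univ_eq_zero_of_symm h_empty_f h_symm, h_empty_f] at h
  linarith

theorem map_sdiff_add_map_sdiff_le
    (h_submod : ∀ A B : Finset V, f (A ∪ B) + f (A ∩ B) ≤ f A + f B)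
    (h_symm : ∀ A : Finset V, f A = f (univ \ A)) (A B : Finset V) :
    f (A \ B) + f (B \ A) ≤ f A + f B := by
  have h := h_submod (univ \ A) B
  have h_union : (univ \ A) ∪ B = univ \ (A \ B) := by
    ext; simp only [mem_union, mem_sdiff, mem_univ, true_and]; tauto
  have h_inter : (univ \ A) ∩ B = B \ A := by
    ext; simp only [mem_inter, mem_sdiff, mem_univ, true_and]; tauto
  rwa [h_union, h_inter, ← h_symm, ← h_symm] at h

theorem map_inter_add_map_sdiff_le
    (h_submod : ∀ A B : Finset V, f (A ∪ B) + f (A ∩ B) ≤ f A + f B)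
    (h_empty_f : f ∅ = 0) (h_symm : ∀ A : Finset V, f A = f (univ \ A)) (W T : Finset V) :
    f (W ∩ T) + f (W \ T) ≤ f W + 2 * f T := by
  have h_cup := h_submod W T
  have h_diff := map_sdiff_add_map_sdiff_le h_submod h_symm W T
  have h_outer := map_sdiff_add_map_sdiff_le h_submod h_symm (W ∪ T) (T \ W)
  have h_left : (W ∪ T) \ (T \ W) = W := by ext; simp only [mem_union, mem_sdiff]; tauto
  have h_right : (T \ W) \ (W ∪ T) = ∅ := by
    ext; simp only [mem_union, mem_sdiff, notMem_empty]; tauto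
  rw [h_left, h_right, h_empty_f] at h_outer
  linarith

end SymmetricSubmodular

def splitClass (P : Finset (Finset V)) (W X : Finset V) : Finset (Finset V) :=
  insert X (insert (W \ X) (P.erase W))

def IsTransversal (P : Finset (Finset V)) (J : Finset V) : Prop :=
  ∀ X ∈ P, (J ∩ X).card = 1

namespace IsPartition

variable {P : Finset (Finset V)}

theorem exists_mem (hP : IsPartition P) (x : V) : ∃ X ∈ P, x ∈ X := by
  have hx : x ∈ P.sup id := hP.2.2 ▸ mem_univ x
  simpa [mem_sup] using hx

theorem eq_of_mem_of_mem (hP : IsPartition P) {X Y : Finset V} (hX : X ∈ P) (hY : Y ∈ P)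
    {x : V} (hxX : x ∈ X) (hxY : x ∈ Y) : X = Y := by
  by_contra hXY
  exact disjoint_left.1 (hP.2.1 X hX Y hY hXY) hxX hxY

theorem card_eq_sum_card_inter (hP : IsPartition P) (A : Finset V) :
    A.card = ∑ X ∈ P, (A ∩ X).card := by
  have hA : A = P.biUnion (A ∩ ·) := by
    ext x
    obtain ⟨X, hX, hxX⟩ := hP.exists_mem x
    simp only [mem_biUnion, mem_inter]
    exact ⟨fun hx => ⟨X, hX, hx, hxX⟩, fun ⟨_, _, hx, _⟩ => hx⟩
  conv_lhs => rw [hA]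
  exact card_biUnion fun X hX Y hY hXY =>
    (hP.2.1 X hX Y hY hXY).mono inter_subset_right inter_subset_right

theorem card_le_card_filter_inter_nonempty (hP : IsPartition P) {A : Finset V}
    (hA : ∀ X ∈ P, (A ∩ X).card ≤ 1) : A.card ≤ #{X ∈ P | (A ∩ X).Nonempty} := by
  rw [hP.card_eq_sum_card_inter, card_filter]
  refine sum_le_sum fun X hX => ?_
  split_ifs with hne
  · exact hA X hX
  · simp [not_nonempty_iff_eq_empty.1 hne]

theorem card_eq_of_isTransversal (hP : IsPartition P) {J : Finset V} (hJ : IsTransversal P J) :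
    J.card = P.card := by
  rw [hP.card_eq_sum_card_inter, sum_congr rfl hJ, card_eq_sum_ones]

variable {W X : Finset V}

theorem sum_splitClass {M : Type*} [AddCommMonoid M] (g : Finset V → M) (hP : IsPartition P)
    (hW : W ∈ P) (hX : X.Nonempty) (hXW : X ⊂ W) :
    ∑ Y ∈ splitClass P W X, g Y + g W = ∑ Y ∈ P, g Y + g X + g (W \ X) := by
  obtain ⟨x, hx⟩ := hX
  obtain ⟨y, hy⟩ := sdiff_nonempty.2 hXW.not_subset
  have hWX : W \ X ∉ P.erase W := fun h =>
    ne_of_mem_erase h (hP.eq_of_mem_of_mem (mem_of_mem_erase h) hW hy (sdiff_subset hy))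
  have hX : X ∉ insert (W \ X) (P.erase W) := by
    intro h
    rcases mem_insert.1 h with h | h
    · exact (mem_sdiff.1 (h ▸ hx)).2 hx
    · exact ne_of_mem_erase h (hP.eq_of_mem_of_mem (mem_of_mem_erase h) hW hx (hXW.subset hx))
  rw [splitClass, sum_insert hX, sum_insert hWX, ← sum_erase_add P g hW]
  abel

theorem card_splitClass (hP : IsPartition P) (hW : W ∈ P) (hX : X.Nonempty) (hXW : X ⊂ W) :
    (splitClass P W X).card = P.card + 1 := by
  have h := sum_splitClass (fun _ => 1) hP hW hX hXW
  simp only [sum_const, smul_eq_mul, mul_one] at h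
  omega

theorem isPartition_splitClass (hP : IsPartition P) (hW : W ∈ P) (hX : X.Nonempty) (hXW : X ⊂ W) :
    IsPartition (splitClass P W X) := by
  have hdisj : ∀ Y ∈ P.erase W, Disjoint W Y := fun Y hY =>
    hP.2.1 W hW Y (mem_of_mem_erase hY) (ne_of_mem_erase hY).symm
  refine ⟨?_, ?_, ?_⟩
  · intro Y hY
    simp only [splitClass, mem_insert] at hY
    rcases hY with rfl | rfl | hY
    exacts [hX, sdiff_nonempty.2 hXW.not_subset, hP.1 Y (mem_of_mem_erase hY)]
  · have hpair : (P : Set (Finset V)).Pairwise Disjoint := fun Y hY Z hZ => hP.2.1 Y hY Z hZ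
    have h_split : (↑(splitClass P W X) : Set (Finset V)).PairwiseDisjoint id := by
      rw [splitClass, coe_insert, coe_insert, Set.pairwiseDisjoint_insert,
        Set.pairwiseDisjoint_insert]
      refine ⟨⟨hpair.mono (coe_subset.2 (erase_subset W P)),
        fun Y hY _ => (hdisj Y hY).mono_left sdiff_subset⟩, ?_⟩
      intro Y hY _
      rcases hY with rfl | hY
      exacts [disjoint_sdiff, (hdisj Y hY).mono_left hXW.subset]
    exact fun Y hY Z hZ => h_split hY hZ
  · calc (splitClass P W X).sup id = (insert W (P.erase W)).sup id := by
          rw [splitClass, sup_insert, sup_insert, ← sup_assoc, sup_insert]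
          simp only [id, sup_eq_union, union_sdiff_of_subset hXW.subset]
      _ = univ := by rw [insert_erase hW, hP.2.2]

end IsPartition

namespace IsTransversal

section

variable {α : Type*} [DecidableEq α] {P : Finset (Finset α)} {J W : Finset α} {a b : α}

theorem inter_eq_singleton (hJ : IsTransversal P J) (hW : W ∈ P) (ha : a ∈ J) (haW : a ∈ W) :
    J ∩ W = {a} :=
  eq_singleton_iff_unique_mem.2 ⟨mem_inter.2 ⟨ha, haW⟩, fun _ hx =>
    card_le_one.1 (hJ W hW).le _ hx _ (mem_inter.2 ⟨ha, haW⟩)⟩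

theorem exists_mem (hJ : IsTransversal P J) (hW : W ∈ P) : ∃ a ∈ J, a ∈ W := by
  obtain ⟨a, ha⟩ := card_pos.1 ((hJ W hW).symm ▸ one_pos)
  exact ⟨a, (mem_inter.1 ha).1, (mem_inter.1 ha).2⟩

theorem notMem_of_ne (hJ : IsTransversal P J) (hW : W ∈ P) (ha : a ∈ J) (hb : b ∈ J)
    (hab : a ≠ b) (haW : a ∈ W) : b ∉ W := fun hbW =>
  hab ((mem_singleton.1 (hJ.inter_eq_singleton hW ha haW ▸ mem_inter.2 ⟨hb, hbW⟩)).symm)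

theorem card_insert_inter_eq_one (hJ : IsTransversal P J) (hW : W ∈ P) (ha : a ∈ J)
    (haW : a ∈ W) (hbW : b ∈ W) {Y : Finset α} (hYW : Y ⊆ W) (hsep : b ∈ Y ↔ a ∉ Y) :
    (insert b J ∩ Y).card = 1 := by
  rw [← inter_eq_right.2 hYW, ← inter_assoc, insert_inter_of_mem hbW,
    hJ.inter_eq_singleton hW ha haW]
  by_cases hbY : b ∈ Y
  · simp [hbY, hsep.1 hbY]
  · simp [hbY, not_not.1 (mt hsep.2 hbY)]

end

variable {P : Finset (Finset V)} {J W : Finset V} {a b : V}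

theorem insert_erase (hP : IsPartition P) (hJ : IsTransversal P J) (hW : W ∈ P) (ha : a ∈ J)
    (haW : a ∈ W) (hbW : b ∈ W) : IsTransversal P (insert b (J.erase a)) := by
  intro Y hY
  by_cases hYW : Y = W
  · subst hYW
    rw [insert_inter_of_mem hbW, erase_inter, hJ.inter_eq_singleton hY ha haW,
      erase_singleton, insert_empty, card_singleton]
  · have hbY : b ∉ Y := fun hbY => hYW (hP.eq_of_mem_of_mem hY hW hbY hbW)
    have haY : a ∉ Y := fun haY => hYW (hP.eq_of_mem_of_mem hY hW haY haW)
    rw [insert_inter_of_notMem hbY, erase_inter, erase_eq_of_notMem fun h => haY (mem_inter.1 h).2]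
    exact hJ Y hY

theorem insert_splitClass (hP : IsPartition P) (hJ : IsTransversal P J) (hW : W ∈ P)
    (ha : a ∈ J) (haW : a ∈ W) (hbW : b ∈ W) {X : Finset V} (hXW : X ⊆ W)
    (hsep : b ∈ X ↔ a ∉ X) : IsTransversal (splitClass P W X) (insert b J) := by
  intro Y hY
  simp only [splitClass, mem_insert] at hY
  rcases hY with rfl | rfl | hY
  · exact hJ.card_insert_inter_eq_one hW ha haW hbW hXW hsep
  · refine hJ.card_insert_inter_eq_one hW ha haW hbW sdiff_subset ?_
    simp only [mem_sdiff, hbW, haW, true_and]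
    tauto
  · have hbY : b ∉ Y := fun hbY =>
      ne_of_mem_erase hY (hP.eq_of_mem_of_mem (mem_of_mem_erase hY) hW hbY hbW)
    rw [insert_inter_of_notMem hbY]
    exact hJ Y (mem_of_mem_erase hY)

end IsTransversal

theorem exists_subset_sdiff_card_eq_indep_union {α : Type*} [DecidableEq α]
    {Indep : Finset α → Prop}
    (h_exchange : ∀ ⦃I J : Finset α⦄, Indep I → Indep J → I.card < J.card →
      ∃ e ∈ J \ I, Indep (insert e I)) {B : Finset α} (hB : Indep B) :
    ∀ (n : ℕ) (J : Finset α), Indep J → J.card + n ≤ B.card →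
      ∃ E ⊆ B \ J, E.card = n ∧ Indep (J ∪ E)
  | 0, J, hJ, _ => ⟨∅, empty_subset _, rfl, by simpa using hJ⟩
  | n + 1, J, hJ, hn => by
    obtain ⟨e, he, heJ⟩ := h_exchange hJ hB (by omega)
    have he' := mem_sdiff.1 he
    obtain ⟨E, hE, hEn, hJE⟩ := exists_subset_sdiff_card_eq_indep_union h_exchange hB n
      (insert e J) heJ (by rw [card_insert_of_notMem he'.2]; omega)
    have heE : e ∉ E := fun h => (mem_sdiff.1 (hE h)).2 (mem_insert_self e J)
    refine ⟨insert e E, insert_subset he (hE.trans (sdiff_subset_sdiff subset_rfl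
      (subset_insert e J))), by rw [card_insert_of_notMem heE, hEn], ?_⟩
    rwa [union_insert, ← insert_union]

section Splitting

variable {Indep : Finset V → Prop} {P : Finset (Finset V)} {B J W T : Finset V} {a b : V}

theorem IsTransversal.mem_of_card_inter_maximal
    (h_subset : ∀ ⦃I J : Finset V⦄, Indep J → I ⊆ J → Indep I) (hP : IsPartition P)
    (hJ : IsTransversal P J)
    (hmax : ∀ J', Indep J' → IsTransversal P J' → (J' ∩ B).card ≤ (J ∩ B).card)
    (hbB : b ∈ B) (hbJ : b ∉ J) (hbI : Indep (insert b J)) (hW : W ∈ P) (hbW : b ∈ W)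
    (ha : a ∈ J) (haW : a ∈ W) : a ∈ B := by
  by_contra haB
  have h := hmax _ (h_subset hbI (insert_subset_insert b (erase_subset a J)))
    (hJ.insert_erase hP hW ha haW hbW)
  rw [insert_inter_of_mem hbB, erase_inter, erase_eq_of_notMem fun h => haB (mem_inter.1 h).2,
    card_insert_of_notMem fun h => hbJ (mem_inter.1 h).1] at h
  omega

def CanSplitAlong (Indep : Finset V → Prop) (P : Finset (Finset V)) (T : Finset V) : Prop :=
  ∃ W ∈ P, (W ∩ T).Nonempty ∧ W ∩ T ⊂ W ∧ AdmitsTransversal Indep (splitClass P W (W ∩ T))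

theorem IsTransversal.canSplitAlong (hP : IsPartition P) (hJ : IsTransversal P J)
    (hbI : Indep (insert b J)) (hW : W ∈ P) (ha : a ∈ J) (haW : a ∈ W) (hbW : b ∈ W)
    (hsep : b ∈ T ↔ a ∉ T) : CanSplitAlong Indep P T := by
  have hsep' : b ∈ W ∩ T ↔ a ∉ W ∩ T := by simpa [hbW, haW] using hsep
  refine ⟨W, hW, ?_, (ssubset_iff_of_subset inter_subset_left).2 ?_, insert b J, hbI,
    hJ.insert_splitClass hP hW ha haW hbW inter_subset_left hsep'⟩
  · by_cases hb : b ∈ W ∩ T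
    exacts [⟨b, hb⟩, ⟨a, not_not.1 (mt hsep'.2 hb)⟩]
  · by_cases hb : b ∈ W ∩ T
    exacts [⟨a, haW, hsep'.1 hb⟩, ⟨b, hbW, hb⟩]

end Splitting

open Classical in
theorem Feasible.sub_card_add_one_le_card_filter_canSplitAlong {Indep : Finset V → Prop}
    (h_subset : ∀ ⦃I J : Finset V⦄, Indep J → I ⊆ J → Indep I)
    (h_exchange : ∀ ⦃I J : Finset V⦄, Indep I → Indep J → I.card < J.card →
      ∃ e ∈ J \ I, Indep (insert e I))
    {k : ℕ} {Pstar P : Finset (Finset V)} (hPstar : Feasible Indep k Pstar)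
    (hP : IsPartition P) (hPI : AdmitsTransversal Indep P) (hPk : P.card < k) :
    k - P.card + 1 ≤ #{T ∈ Pstar | CanSplitAlong Indep P T} := by
  obtain ⟨hPstar, B, hB, hBk, hBT : IsTransversal Pstar B⟩ := hPstar
  obtain ⟨J, hJmem, hJmax⟩ := exists_max_image {J | Indep J ∧ IsTransversal P J}
    (fun J => (J ∩ B).card) (by obtain ⟨J, hJ⟩ := hPI; exact ⟨J, mem_filter.2 ⟨mem_univ J, hJ⟩⟩)
  obtain ⟨hJ, hJT⟩ := (mem_filter.1 hJmem).2
  replace hJmax J' hJ' hJT' := hJmax J' (mem_filter.2 ⟨mem_univ J', hJ', hJT'⟩)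
  obtain ⟨E, hEBJ, hEcard, hJE⟩ := exists_subset_sdiff_card_eq_indep_union h_exchange hB
    (k - P.card) J hJ (by rw [hP.card_eq_of_isTransversal hJT]; omega)
  have hE b (hb : b ∈ E) : b ∈ B ∧ b ∉ J ∧ Indep (insert b J) :=
    ⟨(mem_sdiff.1 (hEBJ hb)).1, (mem_sdiff.1 (hEBJ hb)).2,
      h_subset hJE (insert_subset (mem_union_right _ hb) subset_union_left)⟩
  have hrep b (hb : b ∈ E) : ∃ W ∈ P, b ∈ W ∧ ∃ a ∈ J, a ∈ W ∧ a ∈ B ∧ a ≠ b := by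
    obtain ⟨W, hW, hbW⟩ := hP.exists_mem b
    obtain ⟨a, ha, haW⟩ := hJT.exists_mem hW
    exact ⟨W, hW, hbW, a, ha, haW, hJT.mem_of_card_inter_maximal h_subset hP hJmax (hE b hb).1
      (hE b hb).2.1 (hE b hb).2.2 hW hbW ha haW, fun h => (hE b hb).2.1 (h ▸ ha)⟩
  set A := {x ∈ B | ∀ T ∈ Pstar, x ∈ T → CanSplitAlong Indep P T}
  have hEA : E ⊆ A := fun b hb => by
    obtain ⟨W, hW, hbW, a, ha, haW, haB, hab⟩ := hrep b hb
    refine mem_filter.2 ⟨(hE b hb).1, fun T hT hbT => ?_⟩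
    exact hJT.canSplitAlong hP (hE b hb).2.2 hW ha haW hbW
      (iff_of_true hbT (hBT.notMem_of_ne hT (hE b hb).1 haB hab.symm hbT))
  obtain ⟨b, hb⟩ := card_pos.1 (by omega : 0 < E.card)
  obtain ⟨W, hW, hbW, a, ha, haW, haB, hab⟩ := hrep b hb
  have haA : a ∈ A := mem_filter.2 ⟨haB, fun T hT haT => hJT.canSplitAlong hP (hE b hb).2.2 hW
    ha haW hbW (iff_of_false (hBT.notMem_of_ne hT haB (hE b hb).1 hab haT) (not_not.2 haT))⟩
  have haE : a ∉ E := fun h => (hE a h).2.1 ha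
  calc k - P.card + 1 = (insert a E).card := by rw [card_insert_of_notMem haE, hEcard]
    _ ≤ A.card := card_le_card (insert_subset haA hEA)
    _ ≤ #{T ∈ Pstar | (A ∩ T).Nonempty} := hPstar.card_le_card_filter_inter_nonempty fun T hT =>
        (card_le_card (inter_subset_inter_right (filter_subset _ B))).trans (hBT T hT).le
    _ ≤ #{T ∈ Pstar | CanSplitAlong Indep P T} := card_le_card <| monotone_filter_right _
        fun T hT ⟨x, hx⟩ => (mem_filter.1 (mem_inter.1 hx).1).2 T hT (mem_inter.1 hx).2

theorem exists_subset_card_eq_sum_range_le {α β : Type*} [DecidableEq α] [AddCommMonoid β]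
    [LinearOrder β] [IsOrderedAddMonoid β] (S : Finset α) (w : α → β) :
    ∀ (n : ℕ) (c : ℕ → β), (∀ i < n, n - i ≤ #{a ∈ S | c i ≤ w a}) →
      ∃ R ⊆ S, R.card = n ∧ ∑ i ∈ range n, c i ≤ ∑ a ∈ R, w a
  | 0, _, _ => ⟨∅, empty_subset S, rfl, by simp⟩
  | n + 1, c, hc => by
    obtain ⟨R, hRS, hRn, hR⟩ := exists_subset_card_eq_sum_range_le S w n (fun i => c (i + 1))
      fun i hi => by simpa using hc (i + 1) (by omega)
    obtain ⟨a, ha, haR⟩ := exists_mem_notMem_of_card_lt_card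
      (by have := hc 0 (by omega); omega : R.card < #{a ∈ S | c 0 ≤ w a})
    obtain ⟨haS, hca⟩ := mem_filter.1 ha
    refine ⟨insert a R, insert_subset haS hRS, by rw [card_insert_of_notMem haR, hRn], ?_⟩
    rw [sum_range_succ', sum_insert haR, add_comm (w a)]
    exact add_le_add hR hca

theorem sum_erase_le_of_forall_le {α : Type*} [DecidableEq α] {s : Finset α} {g : α → ℝ} {a : α}
    (ha : a ∈ s) (hmax : ∀ x ∈ s, g x ≤ g a) :
    ∑ x ∈ s.erase a, g x ≤ (1 - 1 / s.card) * ∑ x ∈ s, g x := by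
  have hs : (0 : ℝ) < s.card := by exact_mod_cast card_pos.2 ⟨a, ha⟩
  have h_avg : (∑ x ∈ s, g x) / s.card ≤ g a := by
    rw [div_le_iff₀ hs, mul_comm, ← nsmul_eq_mul]
    exact sum_le_card_nsmul s g (g a) hmax
  rw [← sum_erase_add s g ha] at h_avg ⊢
  rw [sub_mul, one_mul, one_div_mul_eq_div]
  linarith

section Greedy

variable {f : Finset V → ℝ} {Indep : Finset V → Prop} {k : ℕ} {P : ℕ → Finset (Finset V)}

theorem isPartition_singleton_univ [Nonempty V] : IsPartition ({univ} : Finset (Finset V)) :=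
  ⟨by simp, by simp, by simp⟩

theorem GreedySplitSeq.isPartition_card_admitsTransversal (hP : GreedySplitSeq f Indep k P)
    (h_one : AdmitsTransversal Indep {univ}) {i : ℕ} (hi : 1 ≤ i) (hik : i ≤ k) :
    IsPartition (P i) ∧ (P i).card = i ∧ AdmitsTransversal Indep (P i) := by
  induction i, hi using Nat.le_induction with
  | base =>
    have : Nonempty V := by
      obtain ⟨I, -, hI⟩ := h_one
      obtain ⟨x, -⟩ := card_pos.1 ((hI univ (mem_singleton_self _)).symm ▸ one_pos)
      exact ⟨x⟩
    rw [hP.1]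
    exact ⟨isPartition_singleton_univ, card_singleton _, h_one⟩
  | succ i hi ih =>
    obtain ⟨hPi, hcard, -⟩ := ih (by omega)
    obtain ⟨W, hW, X, hX, hXW, hPeq, hPI, -⟩ := hP.2 i hi hik
    rw [hPeq]
    exact ⟨hPi.isPartition_splitClass hW hX hXW,
      (hPi.card_splitClass hW hX hXW).trans (congrArg (· + 1) hcard), hPeq ▸ hPI⟩

theorem GreedySplitSeq.sum_succ_le (hP : GreedySplitSeq f Indep k P)
    (h_submod : ∀ A B : Finset V, f (A ∪ B) + f (A ∩ B) ≤ f A + f B)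
    (h_empty_f : f ∅ = 0) (h_symm : ∀ A : Finset V, f A = f (univ \ A))
    {i : ℕ} (hi : 1 ≤ i) (hik : i + 1 ≤ k) (hPi : IsPartition (P i)) {T : Finset V}
    (hT : CanSplitAlong Indep (P i) T) :
    ∑ X ∈ P (i + 1), f X ≤ ∑ X ∈ P i, f X + 2 * f T := by
  obtain ⟨W, hW, X, hX, hXW, hPeq, -, hmin⟩ := hP.2 i hi hik
  obtain ⟨W', hW', hne, hss, hadm⟩ := hT
  have h_split := hPi.sum_splitClass f hW hX hXW
  have h_min := hmin W' hW' _ hne hss hadm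
  rw [sdiff_inter_self_left] at h_min
  have h_cost := map_inter_add_map_sdiff_le h_submod h_empty_f h_symm W' T
  rw [show P (i + 1) = splitClass (P i) W X from hPeq]
  linarith

theorem GreedySplitSeq.sub_add_one_le_card_filter (hP : GreedySplitSeq f Indep k P)
    (h_submod : ∀ A B : Finset V, f (A ∪ B) + f (A ∩ B) ≤ f A + f B)
    (h_empty_f : f ∅ = 0) (h_symm : ∀ A : Finset V, f A = f (univ \ A))
    (h_subset : ∀ ⦃I J : Finset V⦄, Indep J → I ⊆ J → Indep I)
    (h_exchange : ∀ ⦃I J : Finset V⦄, Indep I → Indep J → I.card < J.card →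
      ∃ e ∈ J \ I, Indep (insert e I))
    {Pstar : Finset (Finset V)} (hPstar : Feasible Indep k Pstar)
    (h_one : AdmitsTransversal Indep {univ}) {i : ℕ} (hi : 1 ≤ i) (hik : i + 1 ≤ k) :
    k - i + 1 ≤ #{T ∈ Pstar | ∑ X ∈ P (i + 1), f X - ∑ X ∈ P i, f X ≤ 2 * f T} := by
  classical
  obtain ⟨hPi, hcard, hPiI⟩ := hP.isPartition_card_admitsTransversal h_one hi (by omega)
  calc k - i + 1 = k - (P i).card + 1 := by rw [hcard]
    _ ≤ #{T ∈ Pstar | CanSplitAlong Indep (P i) T} :=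
      hPstar.sub_card_add_one_le_card_filter_canSplitAlong h_subset h_exchange hPi hPiI (by omega)
    _ ≤ _ := card_le_card <| monotone_filter_right _ fun T _ hT => by
      linarith [hP.sum_succ_le h_submod h_empty_f h_symm hi hik hPi hT]

theorem GreedySplitSeq.sum_le_two_mul_sum_erase (hP : GreedySplitSeq f Indep k P)
    (h_submod : ∀ A B : Finset V, f (A ∪ B) + f (A ∩ B) ≤ f A + f B)
    (h_empty_f : f ∅ = 0) (h_symm : ∀ A : Finset V, f A = f (univ \ A))
    (h_subset : ∀ ⦃I J : Finset V⦄, Indep J → I ⊆ J → Indep I)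
    (h_exchange : ∀ ⦃I J : Finset V⦄, Indep I → Indep J → I.card < J.card →
      ∃ e ∈ J \ I, Indep (insert e I))
    {Pstar : Finset (Finset V)} (hPstar : Feasible Indep k Pstar)
    (h_one : AdmitsTransversal Indep {univ}) (hk : 1 ≤ k) {T₀ : Finset V} :
    ∑ X ∈ P k, f X ≤ 2 * ∑ T ∈ Pstar.erase T₀, f T := by
  set s : ℕ → ℝ := fun i => ∑ X ∈ P i, f X
  -- The `k - 1` increments are charged to distinct classes of `Pstar` other than `T₀`.
  obtain ⟨R, hR, -, h_charge⟩ := exists_subset_card_eq_sum_range_le (Pstar.erase T₀)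
    (fun T => 2 * f T) (k - 1) (fun j => s (j + 1 + 1) - s (j + 1)) fun j hj => by
      have h := hP.sub_add_one_le_card_filter h_submod h_empty_f h_symm h_subset h_exchange
        hPstar h_one (i := j + 1) (by omega) (by omega)
      change k - (j + 1) + 1 ≤ #{T ∈ Pstar | s (j + 1 + 1) - s (j + 1) ≤ 2 * f T} at h
      rw [filter_erase]
      have := pred_card_le_card_erase (s := {T ∈ Pstar | s (j + 1 + 1) - s (j + 1) ≤ 2 * f T})
        (a := T₀)
      omega
  have hs_one : s 1 = 0 := by simp [s, hP.1, map_univ_eq_zero_of_symm h_empty_f h_symm]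
  calc s k = s 1 + ∑ j ∈ range (k - 1), (s (j + 1 + 1) - s (j + 1)) := by
        rw [← eq_sum_range_sub (fun j => s (j + 1)), Nat.sub_add_cancel hk]
    _ ≤ ∑ T ∈ R, 2 * f T := by rw [hs_one, zero_add]; exact h_charge
    _ ≤ 2 * ∑ T ∈ Pstar.erase T₀, f T := by
        rw [← mul_sum]
        exact mul_le_mul_of_nonneg_left (sum_le_sum_of_subset_of_nonneg hR fun T _ _ =>
          nonneg_of_symm_submod h_submod h_empty_f h_symm T) zero_le_two

end Greedy

theorem greedy_splitting_symmetric_approx_general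
    (f : Finset V → ℝ)
    (h_submod : ∀ A B : Finset V, f (A ∪ B) + f (A ∩ B) ≤ f A + f B)
    (h_empty_f : f ∅ = 0)
    (h_symm : ∀ A : Finset V, f A = f (Finset.univ \ A))
    (Indep : Finset V → Prop)
    (h_subset : ∀ ⦃I J : Finset V⦄, Indep J → I ⊆ J → Indep I)
    (h_exchange : ∀ ⦃I J : Finset V⦄, Indep I → Indep J → I.card < J.card →
      ∃ e ∈ J \ I, Indep (insert e I))
    (k : ℕ) (hk : 2 ≤ k)
    (P : ℕ → Finset (Finset V)) (hP : GreedySplitSeq f Indep k P)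
    (Pstar : Finset (Finset V)) (hPstar : Feasible Indep k Pstar) :
    ∑ X ∈ P k, f X ≤ (2 - 2 / (k : ℝ)) * ∑ X ∈ Pstar, f X := by
  obtain ⟨hPstar_part, B, hB, hBk, hBT⟩ := id hPstar
  have hPstar_card : Pstar.card = k := hBk ▸ (hPstar_part.card_eq_of_isTransversal hBT).symm
  obtain ⟨Tmax, hTmax, hmax⟩ := Pstar.exists_max_image f (card_pos.1 (by omega))
  obtain ⟨b, hb⟩ := card_pos.1 (by omega : 0 < B.card)
  have h_one : AdmitsTransversal Indep {univ} :=
    ⟨{b}, h_subset hB (singleton_subset_iff.2 hb), by simp⟩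
  calc ∑ X ∈ P k, f X ≤ 2 * ∑ T ∈ Pstar.erase Tmax, f T :=
        hP.sum_le_two_mul_sum_erase h_submod h_empty_f h_symm h_subset h_exchange hPstar h_one
          (by omega)
    _ ≤ 2 * ((1 - 1 / k) * ∑ T ∈ Pstar, f T) := by
        rw [← hPstar_card]
        exact mul_le_mul_of_nonneg_left (sum_erase_le_of_forall_le hTmax hmax) zero_le_two
    _ = (2 - 2 / (k : ℝ)) * ∑ X ∈ Pstar, f X := by ring

/-- greedy splitting is a (2 - 2/k)-approximation for symmetric submodular matroid-constrained partitioning. -/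
theorem greedy_splitting_symmetric_approx
    (f : Finset V → ℝ)
    (h_nonneg : ∀ A : Finset V, 0 ≤ f A)
    (h_submod : ∀ A B : Finset V, f (A ∪ B) + f (A ∩ B) ≤ f A + f B)
    (h_empty_f : f ∅ = 0)
    (h_symm : ∀ A : Finset V, f A = f (Finset.univ \ A))
    (Indep : Finset V → Prop)
    (h_empty : Indep ∅)
    (h_subset : ∀ ⦃I J : Finset V⦄, Indep J → I ⊆ J → Indep I)
    (h_exchange : ∀ ⦃I J : Finset V⦄, Indep I → Indep J → I.card < J.card →
      ∃ e ∈ J \ I, Indep (insert e I))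
    (k : ℕ) (hk : 2 ≤ k)
    (h_rank_le : ∀ I : Finset V, Indep I → I.card ≤ k)
    (h_rank_eq : ∃ B : Finset V, Indep B ∧ B.card = k)
    (P : ℕ → Finset (Finset V)) (hP : GreedySplitSeq f Indep k P)
    (Pstar : Finset (Finset V)) (hPstar : Feasible Indep k Pstar) :
    ∑ X ∈ P k, f X ≤ (2 - 2 / (k : ℝ)) * ∑ X ∈ Pstar, f X :=
  greedy_splitting_symmetric_approx_general f h_submod h_empty_f h_symm Indep h_subset h_exchange k
    hk P hP Pstar hPstar
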